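/- Let F be a homogeneous form of degree δ in N+1 variables over a valued field K, and B ∈ GL_{N+1}(K). Then log‖F(B·X)‖ ≤ log‖F‖ + δ·log‖B‖ + δ·log⁺|N+1| + δ·log⁺|2| + N·log⁺|2|, where ‖B‖ is the entry sup norm and ‖F‖ the coefficient sup norm. -/

import Mathlib

open MvPolynomial

/-- The sup norm of the coefficients of a multivariate polynomial over a normed field. -/
noncomputable def coeffNorm {σ K : Type*} [NormedField K] (F : MvPolynomial σ K) : ℝ :=
  ((F.support.sup fun m => ‖F.coeff m‖₊ : NNReal) : ℝ)

/-- Entrywise sup norm of a square matrix over a normed field. -/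
noncomputable def matNorm {K : Type*} [NormedField K] {n : ℕ}
    (M : Matrix (Fin n) (Fin n) K) : ℝ :=
  (((Finset.univ ×ˢ Finset.univ).sup fun p : Fin n × Fin n => ‖M p.1 p.2‖₊ : NNReal) : ℝ)

/-!
Expanding `F(B·X) = ∑ₘ Fₘ ∏ᵢ (∑ⱼ Bᵢⱼ Xⱼ)^mᵢ`, each of the at most `binom(δ+N, N) ≤ 2^(δ+N)`
monomials of `F` contributes a product of `δ` linear forms, whose coefficients are bounded by
`(max(|N+1|, 1)·‖B‖)^δ`. Both counts enter through `|x₁ + ⋯ + xₙ| ≤ max(|n|, 1)·maxᵢ |xᵢ|`,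
which holds for every absolute value by the tensor power trick: in the multinomial expansion of
the `k`-th power there are polynomially many terms in `k`, each multinomial coefficient is at most
`n^k`, and `|m| ≤ max(|n|, 1)^k` whenever `m ≤ n^k` (expand `m^j` in base `n` and let `j → ∞`).
Invertibility of `B` makes `F(B·X) ≠ 0`, so its logarithm is not a junk value.
-/

open Finset Filter Topology

theorem le_of_forall_pow_le_mul_pow {a b c : ℝ} {d : ℕ} (hb : 0 ≤ b)
    (h : ∀ k : ℕ, a ^ k ≤ c * ((k : ℝ) + 1) ^ d * b ^ k) : a ≤ b := by
  rcases hb.eq_or_lt with rfl | hb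
  · simpa using h 1
  by_contra! hab
  have hr : 1 < a / b := (one_lt_div hb).2 hab
  have hlim : Tendsto (fun k : ℕ => c * ((k : ℝ) + 1) ^ d / (a / b) ^ k) atTop (𝓝 0) := by
    have := ((tendsto_pow_const_div_const_pow_of_one_lt d hr).comp
      (tendsto_add_atTop_nat 1)).const_mul (c * (a / b))
    rw [mul_zero] at this
    refine this.congr fun k => ?_
    simp only [Function.comp_apply, Nat.cast_add, Nat.cast_one, pow_succ]
    field_simp [(hb.trans hab).ne']
  obtain ⟨k, hk⟩ := (hlim.eventually (gt_mem_nhds one_pos)).exists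
  have hpos : 0 < (a / b) ^ k := pow_pos (one_pos.trans hr) k
  rw [div_lt_one hpos, div_pow, lt_div_iff₀ (pow_pos hb k)] at hk
  exact (h k).not_gt hk

section NormedField

variable {K : Type*} [NormedField K]

theorem norm_natCast_le_of_le_pow {n : ℕ} (hn : 1 ≤ n) {l t : ℕ} (ht : t ≤ n ^ l) :
    ‖(t : K)‖ ≤ (l + 1) * n * max ‖(n : K)‖ 1 ^ l := by
  set A := max ‖(n : K)‖ 1
  have hA : 1 ≤ A := le_max_right _ _
  have hnat (m : ℕ) : ‖(m : K)‖ ≤ m := by simpa using Nat.norm_cast_le (α := K) m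
  induction l generalizing t with
  | zero =>
    have : (t : ℝ) ≤ 1 := by exact_mod_cast ht
    have : (1 : ℝ) ≤ n := by exact_mod_cast hn
    simp only [pow_zero, CharP.cast_eq_zero, zero_add, one_mul, mul_one]
    linarith [hnat t]
  | succ l ih =>
    have hquot : t / n ≤ n ^ l := Nat.div_le_of_le_mul (by rwa [mul_comm, ← pow_succ])
    have hrem : ‖((t % n : ℕ) : K)‖ ≤ n :=
      (hnat _).trans (by exact_mod_cast (Nat.mod_lt t (by omega)).le)
    have hsplit : (t : K) = n * ((t / n : ℕ) : K) + ((t % n : ℕ) : K) := by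
      rw [← Nat.cast_mul, ← Nat.cast_add, Nat.div_add_mod]
    calc ‖(t : K)‖ ≤ A * ((l + 1) * n * A ^ l) + n := by
          rw [hsplit]
          refine (norm_add_le _ _).trans (add_le_add ?_ hrem)
          rw [norm_mul]
          exact mul_le_mul (le_max_left _ _) (ih hquot) (norm_nonneg _) (by positivity)
      _ ≤ ((l + 1 : ℕ) + 1) * n * A ^ (l + 1) := by
          have : (n : ℝ) * 1 ≤ n * A ^ (l + 1) :=
            mul_le_mul_of_nonneg_left (one_le_pow₀ hA) (Nat.cast_nonneg n)
          push_cast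
          linear_combination this

theorem norm_natCast_le_max_pow {n k m : ℕ} (hn : 1 ≤ n) (hm : m ≤ n ^ k) :
    ‖(m : K)‖ ≤ max ‖(n : K)‖ 1 ^ k := by
  refine le_of_forall_pow_le_mul_pow (c := n * (k + 1)) (d := 1) (by positivity) fun j => ?_
  have hmj : m ^ j ≤ n ^ (k * j) := pow_mul n k j ▸ Nat.pow_le_pow_left hm j
  calc ‖(m : K)‖ ^ j = ‖((m ^ j : ℕ) : K)‖ := by rw [Nat.cast_pow, norm_pow]
    _ ≤ ((k * j : ℕ) + 1) * n * max ‖(n : K)‖ 1 ^ (k * j) := norm_natCast_le_of_le_pow hn hmj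
    _ ≤ n * (k + 1) * ((j : ℝ) + 1) ^ 1 * (max ‖(n : K)‖ 1 ^ k) ^ j := by
      rw [← pow_mul]
      refine mul_le_mul_of_nonneg_right ?_ (by positivity)
      have : (1 : ℝ) ≤ n := by exact_mod_cast hn
      push_cast
      nlinarith [(Nat.cast_nonneg k : (0 : ℝ) ≤ k), (Nat.cast_nonneg j : (0 : ℝ) ≤ j)]

theorem Finset.card_piAntidiag_le {ι : Type*} [DecidableEq ι] (s : Finset ι) (j : ℕ) :
    #(piAntidiag s j) ≤ (j + 1) ^ #s := by
  calc #(piAntidiag s j) ≤ #(s.pi fun _ => range (j + 1)) := by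
        refine card_le_card_of_injOn (fun f i _ => f i) (fun f hf => ?_) fun f hf g hg hfg => ?_
        · rw [mem_coe, mem_piAntidiag] at hf
          simp only [mem_coe, mem_pi, mem_range, Nat.lt_succ_iff]
          exact fun i hi => hf.1 ▸ single_le_sum (fun _ _ => Nat.zero_le _) hi
        · rw [mem_coe, mem_piAntidiag] at hf hg
          funext i
          by_cases hi : i ∈ s
          · exact congr_fun₂ hfg i hi
          · rw [not_imp_comm.1 (hf.2 i) hi, not_imp_comm.1 (hg.2 i) hi]
    _ = (j + 1) ^ #s := by simp

theorem norm_sum_le_max_natCast_card_mul {ι : Type*} (s : Finset ι) (f : ι → K) {M : ℝ}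
    (hM : 0 ≤ M) (hf : ∀ i ∈ s, ‖f i‖ ≤ M) :
    ‖∑ i ∈ s, f i‖ ≤ max ‖(#s : K)‖ 1 * M := by
  classical
  rcases s.eq_empty_or_nonempty with rfl | hs
  · simpa using by positivity
  set A := max ‖(#s : K)‖ 1
  refine le_of_forall_pow_le_mul_pow (c := 1) (d := #s) (by positivity) fun j => ?_
  have hmultinomial : ∀ α ∈ piAntidiag s j, ‖(Nat.multinomial s α : K)‖ ≤ A ^ j := by
    refine fun α hα => norm_natCast_le_max_pow hs.card_pos ?_
    have := Finset.sum_pow_eq_sum_piAntidiag (R := ℕ) s (fun _ => 1) j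
    simp only [sum_const, smul_eq_mul, mul_one, one_pow, prod_const_one] at this
    exact this ▸ single_le_sum (fun _ _ => Nat.zero_le _) hα
  have hmonomial : ∀ α ∈ piAntidiag s j, ‖∏ i ∈ s, f i ^ α i‖ ≤ M ^ j := by
    intro α hα
    rw [norm_prod, ← (mem_piAntidiag.1 hα).1, ← prod_pow_eq_pow_sum]
    exact prod_le_prod (fun _ _ => norm_nonneg _) fun i hi =>
      norm_pow (f i) _ ▸ pow_le_pow_left₀ (norm_nonneg _) (hf i hi) _
  calc ‖∑ i ∈ s, f i‖ ^ j
      = ‖∑ α ∈ piAntidiag s j, (Nat.multinomial s α : K) * ∏ i ∈ s, f i ^ α i‖ := by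
        rw [← norm_pow, sum_pow_eq_sum_piAntidiag]
    _ ≤ ∑ α ∈ piAntidiag s j, A ^ j * M ^ j := by
        refine (norm_sum_le _ _).trans (sum_le_sum fun α hα => ?_)
        rw [norm_mul]
        exact mul_le_mul (hmultinomial α hα) (hmonomial α hα) (norm_nonneg _) (by positivity)
    _ ≤ ((j + 1) ^ #s : ℕ) * (A ^ j * M ^ j) := by
        rw [sum_const, nsmul_eq_mul]
        gcongr
        exact card_piAntidiag_le s j
    _ = 1 * ((j : ℝ) + 1) ^ #s * (A * M) ^ j := by push_cast; ring

section CoeffNorm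

variable {σ : Type*}

theorem coeffNorm_nonneg (F : MvPolynomial σ K) : 0 ≤ coeffNorm F := NNReal.coe_nonneg _

theorem norm_coeff_le_coeffNorm (F : MvPolynomial σ K) (m : σ →₀ ℕ) :
    ‖F.coeff m‖ ≤ coeffNorm F := by
  by_cases hm : m ∈ F.support
  · exact NNReal.coe_le_coe.2 (le_sup (f := fun m => ‖F.coeff m‖₊) hm)
  · simpa [notMem_support_iff.1 hm] using coeffNorm_nonneg F

theorem coeffNorm_le {F : MvPolynomial σ K} {R : ℝ} (hR : 0 ≤ R) (h : ∀ m, ‖F.coeff m‖ ≤ R) :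
    coeffNorm F ≤ R := by
  have : F.support.sup (fun m => ‖F.coeff m‖₊) ≤ ⟨R, hR⟩ :=
    Finset.sup_le fun m _ => NNReal.coe_le_coe.1 (h m)
  exact_mod_cast this

theorem coeffNorm_pos {F : MvPolynomial σ K} (hF : F ≠ 0) : 0 < coeffNorm F := by
  obtain ⟨m, hm⟩ := ne_zero_iff.1 hF
  exact (norm_pos_iff.2 hm).trans_le (norm_coeff_le_coeffNorm F m)

theorem coeffNorm_one : coeffNorm (1 : MvPolynomial σ K) = 1 := by
  simp [coeffNorm, support_one]

theorem coeffNorm_C_mul_le (a : K) (P : MvPolynomial σ K) :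
    coeffNorm (C a * P) ≤ ‖a‖ * coeffNorm P :=
  coeffNorm_le (mul_nonneg (norm_nonneg a) (coeffNorm_nonneg P)) fun m => by
    rw [coeff_C_mul, norm_mul]
    exact mul_le_mul_of_nonneg_left (norm_coeff_le_coeffNorm P m) (norm_nonneg a)

theorem coeffNorm_mul_X_le [DecidableEq σ] (P : MvPolynomial σ K) (j : σ) :
    coeffNorm (P * X j) ≤ coeffNorm P :=
  coeffNorm_le (coeffNorm_nonneg P) fun m => by
    rw [coeff_mul_X']
    split_ifs
    · exact norm_coeff_le_coeffNorm P _
    · simpa using coeffNorm_nonneg P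

theorem coeffNorm_sum_le {ι : Type*} (s : Finset ι) (P : ι → MvPolynomial σ K) {M : ℝ}
    (hM : 0 ≤ M) (hP : ∀ i ∈ s, coeffNorm (P i) ≤ M) :
    coeffNorm (∑ i ∈ s, P i) ≤ max ‖(#s : K)‖ 1 * M :=
  coeffNorm_le (by positivity) fun m => by
    rw [coeff_sum]
    exact norm_sum_le_max_natCast_card_mul s _ hM fun i hi =>
      (norm_coeff_le_coeffNorm _ m).trans (hP i hi)

end CoeffNorm

section MatNorm

variable {n : ℕ}

theorem matNorm_nonneg (M : Matrix (Fin n) (Fin n) K) : 0 ≤ matNorm M := NNReal.coe_nonneg _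

theorem norm_le_matNorm (M : Matrix (Fin n) (Fin n) K) (i j : Fin n) : ‖M i j‖ ≤ matNorm M :=
  NNReal.coe_le_coe.2 (le_sup (f := fun p : Fin n × Fin n => ‖M p.1 p.2‖₊) (b := (i, j))
    (mem_product.2 ⟨mem_univ i, mem_univ j⟩))

theorem matNorm_pos {M : Matrix (Fin n) (Fin n) K} (hM : M ≠ 0) : 0 < matNorm M := by
  obtain ⟨i, j, hij⟩ : ∃ i j, M i j ≠ 0 := by
    by_contra! h
    exact hM (Matrix.ext h)
  exact (norm_pos_iff.2 hij).trans_le (norm_le_matNorm M i j)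

end MatNorm

section LinearForms

variable {τ : Type*} [Fintype τ] [DecidableEq τ] {β : ℝ}

theorem coeffNorm_mul_linear_le (P : MvPolynomial τ K) (c : τ → K) (hβ : 0 ≤ β)
    (hc : ∀ j, ‖c j‖ ≤ β) :
    coeffNorm (P * ∑ j, C (c j) * X j) ≤ max ‖(Fintype.card τ : K)‖ 1 * β * coeffNorm P := by
  rw [mul_sum, mul_assoc, ← card_univ]
  refine coeffNorm_sum_le _ _ (mul_nonneg hβ (coeffNorm_nonneg P)) fun j _ => ?_
  rw [mul_left_comm]
  exact (coeffNorm_C_mul_le _ _).trans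
    (mul_le_mul (hc j) (coeffNorm_mul_X_le P j) (coeffNorm_nonneg _) hβ)

theorem coeffNorm_mul_linear_pow_le (P : MvPolynomial τ K) (c : τ → K) (hβ : 0 ≤ β)
    (hc : ∀ j, ‖c j‖ ≤ β) (k : ℕ) :
    coeffNorm (P * (∑ j, C (c j) * X j) ^ k) ≤
      (max ‖(Fintype.card τ : K)‖ 1 * β) ^ k * coeffNorm P := by
  induction k with
  | zero => simp
  | succ k ih =>
    rw [pow_succ, ← mul_assoc]
    calc _ ≤ max ‖(Fintype.card τ : K)‖ 1 * β * coeffNorm (P * (∑ j, C (c j) * X j) ^ k) :=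
          coeffNorm_mul_linear_le _ c hβ hc
      _ ≤ max ‖(Fintype.card τ : K)‖ 1 * β *
            ((max ‖(Fintype.card τ : K)‖ 1 * β) ^ k * coeffNorm P) :=
          mul_le_mul_of_nonneg_left ih (mul_nonneg (by positivity) hβ)
      _ = _ := by ring

theorem coeffNorm_prod_linear_pow_le {ι : Type*} (c : ι → τ → K) (hβ : 0 ≤ β)
    (hc : ∀ i j, ‖c i j‖ ≤ β) (s : Finset ι) (g : ι → ℕ) :
    coeffNorm (∏ i ∈ s, (∑ j, C (c i j) * X j) ^ g i) ≤
      (max ‖(Fintype.card τ : K)‖ 1 * β) ^ ∑ i ∈ s, g i := by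
  classical
  induction s using Finset.induction_on with
  | empty => simp [coeffNorm_one]
  | insert a s ha ih =>
    rw [prod_insert ha, sum_insert ha, mul_comm, pow_add]
    exact (coeffNorm_mul_linear_pow_le _ _ hβ (hc a) _).trans (by gcongr)

theorem coeffNorm_aeval_linear_le {σ : Type*} {δ : ℕ} {F : MvPolynomial σ K}
    (hF : F.IsHomogeneous δ) (c : σ → τ → K) (hβ : 0 ≤ β) (hc : ∀ i j, ‖c i j‖ ≤ β) :
    coeffNorm (aeval (fun i => ∑ j, C (c i j) * X j) F) ≤
      max ‖(#F.support : K)‖ 1 * (coeffNorm F * (max ‖(Fintype.card τ : K)‖ 1 * β) ^ δ) := by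
  rw [aeval_def, eval₂_eq, algebraMap_eq]
  refine coeffNorm_sum_le _ _ (by have := coeffNorm_nonneg F; positivity) fun m hm => ?_
  have hprod := coeffNorm_prod_linear_pow_le c hβ hc m.support m
  rw [← hF.degree_eq_sum_deg_support hm] at hprod
  exact (coeffNorm_C_mul_le _ _).trans
    (mul_le_mul (norm_coeff_le_coeffNorm F m) hprod (coeffNorm_nonneg _) (coeffNorm_nonneg F))

end LinearForms

end NormedField

theorem MvPolynomial.IsHomogeneous.card_support_le {R σ : Type*} [CommSemiring R] [Fintype σ]
    {F : MvPolynomial σ R} {δ : ℕ} (hF : F.IsHomogeneous δ) :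
    #F.support ≤ (Fintype.card σ + δ - 1).choose δ := by
  classical
  rw [← card_univ, ← card_finsuppAntidiag_nat_eq_choose]
  refine card_le_card fun m hm => mem_finsuppAntidiag.2 ⟨?_, subset_univ _⟩
  rw [hF.degree_eq_sum_deg_support hm]
  exact (sum_subset (subset_univ _) fun i _ hi => Finsupp.notMem_support_iff.1 hi).symm

section LinearSubstitution

variable {R σ : Type*} [CommSemiring R] [Fintype σ]

theorem aeval_linear_linear (B B' : Matrix σ σ R) (i : σ) :
    aeval (fun j => ∑ k, C (B' j k) * X k) (∑ j, C (B i j) * X j : MvPolynomial σ R) =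
      ∑ k, C ((B * B') i k) * X k := by
  simp only [map_sum, map_mul, aeval_C, aeval_X, algebraMap_eq, Matrix.mul_apply, mul_sum,
    sum_mul, ← mul_assoc]
  exact sum_comm

theorem aeval_linear_injective [DecidableEq σ] {B : Matrix σ σ R} (hB : IsUnit B) :
    Function.Injective (aeval fun i => ∑ j, C (B i j) * X j : MvPolynomial σ R →ₐ[R] _) := by
  obtain ⟨u, rfl⟩ := hB
  refine Function.LeftInverse.injective
    (g := aeval fun j => ∑ k, C ((↑u⁻¹ : Matrix σ σ R) j k) * X k) fun F => ?_
  have hone : (fun i => ∑ k, C ((1 : Matrix σ σ R) i k) * X k) = X :=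
    funext fun i => by simp [Matrix.one_apply]
  rw [← AlgHom.comp_apply, comp_aeval]
  simp only [aeval_linear_linear, Units.mul_inv, hone, aeval_X_left_apply]

end LinearSubstitution

theorem Real.log_max_one_eq {x : ℝ} (hx : 0 ≤ x) : Real.log (max x 1) = max (Real.log x) 0 := by
  rw [max_comm, ← Real.posLog_eq_log_max_one hx, Real.posLog_apply, max_comm]

theorem stmt7_general {K : Type*} [NormedField K] {N δ : ℕ}
    (F : MvPolynomial (Fin (N + 1)) K) (hF : F ≠ 0) (hhom : F.IsHomogeneous δ)
    (B : Matrix (Fin (N + 1)) (Fin (N + 1)) K) (hB : IsUnit B) :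
    Real.log (coeffNorm
        (MvPolynomial.aeval (fun i => ∑ j, MvPolynomial.C (B i j) * MvPolynomial.X j) F)) ≤
      Real.log (coeffNorm F) + (δ : ℝ) * Real.log (matNorm B)
        + (δ : ℝ) * max (Real.log ‖((N + 1 : ℕ) : K)‖) 0
        + (δ : ℝ) * max (Real.log ‖(2 : K)‖) 0
        + (N : ℝ) * max (Real.log ‖(2 : K)‖) 0 := by
  set A₁ := max ‖((N + 1 : ℕ) : K)‖ 1
  set A₂ := max ‖(2 : K)‖ 1
  have hA₁ : 0 < A₁ := lt_max_of_lt_right one_pos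
  have hA₂ : 1 ≤ A₂ := le_max_right _ _
  have hFpos := coeffNorm_pos hF
  have hBpos := matNorm_pos hB.ne_zero
  have hGpos := coeffNorm_pos ((map_ne_zero_iff _ (aeval_linear_injective hB)).2 hF)
  have hsupport : max ‖(#F.support : K)‖ 1 ≤ A₂ ^ (δ + N) := by
    refine max_le (norm_natCast_le_max_pow one_le_two (hhom.card_support_le.trans ?_))
      (one_le_pow₀ hA₂)
    simpa [add_comm] using Nat.choose_le_two_pow (N + δ) δ
  have hbound := (coeffNorm_aeval_linear_le hhom B (matNorm_nonneg B) (norm_le_matNorm B)).trans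
    (mul_le_mul_of_nonneg_right hsupport (by positivity))
  rw [Fintype.card_fin] at hbound
  calc _ ≤ Real.log (A₂ ^ (δ + N) * (coeffNorm F * (A₁ * matNorm B) ^ δ)) :=
        Real.log_le_log hGpos hbound
    _ = _ := by
        rw [Real.log_mul (by positivity) (by positivity), Real.log_mul hFpos.ne' (by positivity),
          Real.log_pow, Real.log_pow, Real.log_mul hA₁.ne' hBpos.ne', Real.log_max_one_eq
          (norm_nonneg _), Real.log_max_one_eq (norm_nonneg _)]
        push_cast
        ring

/-- for a homogeneous form `F` of degree `δ` in `N+1` variables over a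
complete valued field `K` and `B ∈ GL_{N+1}(K)`,
`log‖F(B·X)‖ ≤ log‖F‖ + δ·log‖B‖ + δ·log⁺|N+1| + δ·log⁺|2| + N·log⁺|2|`. -/
theorem stmt7 {K : Type*} [NormedField K] [CompleteSpace K] {N δ : ℕ}
    (F : MvPolynomial (Fin (N + 1)) K) (hF : F ≠ 0) (hhom : F.IsHomogeneous δ)
    (B : Matrix (Fin (N + 1)) (Fin (N + 1)) K) (hB : IsUnit B) :
    Real.log (coeffNorm
        (MvPolynomial.aeval (fun i => ∑ j, MvPolynomial.C (B i j) * MvPolynomial.X j) F)) ≤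
      Real.log (coeffNorm F) + (δ : ℝ) * Real.log (matNorm B)
        + (δ : ℝ) * max (Real.log ‖((N + 1 : ℕ) : K)‖) 0
        + (δ : ℝ) * max (Real.log ‖(2 : K)‖) 0
        + (N : ℝ) * max (Real.log ‖(2 : K)‖) 0 :=
  stmt7_general F hF hhom B hB
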